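/- Let E^+_{ε}(g)(x_d) = ∫_{ℝ_+} g(y_d)(η_ε(x_d - y_d) + η_ε(x_d + y_d)) dy_d and E^-_ε(g)(x_d) = ∫_{ℝ_+} g(y_d)(η_ε(x_d - y_d) - η_ε(x_d + y_d)) dy_d for a standard one-dimensional mollifier η_ε supported in [-ε, ε] with ∫ η_ε = 1. If g ∈ C¹([0,∞)) with compact support and g(0) = 0, then ∂_{x_d} E^-_ε(g) = E^+_ε(∂_d g) on ℝ, and in general (without g(0)=0), ∂_{x_d} E^-_ε(g) - E^+_ε(∂_d g) = 2 g(0) η_ε(x_d). -/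

import Mathlib

open Real MeasureTheory

/-- Even-extension mollification on the half line. -/
noncomputable def Ep (η g : ℝ → ℝ) (x : ℝ) : ℝ :=
  ∫ y in Set.Ioi (0:ℝ), g y * (η (x - y) + η (x + y))

/-- Odd-extension mollification on the half line. -/
noncomputable def Em (η g : ℝ → ℝ) (x : ℝ) : ℝ :=
  ∫ y in Set.Ioi (0:ℝ), g y * (η (x - y) - η (x + y))

/-- For g ∈ C¹_c([0,∞)): if g(0) = 0 then ∂ E⁻_ε(g) = E⁺_ε(∂g) on ℝ, and in general
∂ E⁻_ε(g) - E⁺_ε(∂g) = 2 g(0) η_ε. -/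
theorem odd_mollification_derivative (ε : ℝ) (hε : 0 < ε)
    (η : ℝ → ℝ) (hη : ContDiff ℝ (⊤ : ℕ∞) η) (heven : ∀ s, η (-s) = η s)
    (hsupp : ∀ s : ℝ, ε < |s| → η s = 0) (hint : ∫ s : ℝ, η s = 1)
    (g : ℝ → ℝ) (hg : ContDiff ℝ 1 g) (hgc : HasCompactSupport g) :
    (g 0 = 0 → ∀ x : ℝ, deriv (Em η g) x = Ep η (deriv g) x) ∧
    (∀ x : ℝ, deriv (Em η g) x - Ep η (deriv g) x = 2 * g 0 * η x) := by
  -- Preliminaries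
  have hcη : HasCompactSupport η := by
    apply HasCompactSupport.intro (isCompact_closedBall (0:ℝ) ε)
    intro x hx
    apply hsupp
    simpa [Metric.mem_closedBall, Real.dist_eq, not_le] using hx
  have hηd : Differentiable ℝ η := hη.differentiable (by simp)
  have hη'c : Continuous (deriv η) := ((contDiff_infty_iff_deriv.mp (hη.of_le (by simp))).2).continuous
  have hcη' : HasCompactSupport (deriv η) := hcη.deriv
  obtain ⟨C', hC'⟩ := hcη'.exists_bound_of_continuous hη'c
  have hgcont : Continuous g := hg.continuous
  have hgd : Differentiable ℝ g := hg.differentiable one_ne_zero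
  have hg'c : Continuous (deriv g) := hg.continuous_deriv le_rfl
  have hcg' : HasCompactSupport (deriv g) := hgc.deriv
  -- integrability helper
  have hint1 : ∀ (ψ φ : ℝ → ℝ), Continuous ψ → HasCompactSupport ψ → Continuous φ →
      Integrable (fun y => ψ y * φ y) (volume.restrict (Set.Ioi (0:ℝ))) := by
    intro ψ φ hψ hψc hφ
    exact ((hψ.mul hφ).integrable_of_hasCompactSupport hψc.mul_right).restrict
  -- derivative of Em
  have hderivEm : ∀ x : ℝ, HasDerivAt (Em η g)
      (∫ y in Set.Ioi (0:ℝ), g y * (deriv η (x - y) - deriv η (x + y))) x := by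
    intro x₀
    have key := hasDerivAt_integral_of_dominated_loc_of_deriv_le
      (F := fun x y => g y * (η (x - y) - η (x + y)))
      (F' := fun x y => g y * (deriv η (x - y) - deriv η (x + y)))
      (bound := fun y => ‖g y‖ * (2 * C'))
      (μ := volume.restrict (Set.Ioi (0:ℝ))) (x₀ := x₀) (s := Metric.ball x₀ 1) (Metric.ball_mem_nhds x₀ one_pos)
      ?_ ?_ ?_ ?_ ?_ ?_
    · exact key.2
    · filter_upwards with x
      exact ((hgcont.mul ((hη.continuous.comp (continuous_const.sub continuous_id)).sub
        (hη.continuous.comp (continuous_const.add continuous_id)))).aestronglyMeasurable)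
    · exact hint1 g _ hgcont hgc (((hη.continuous.comp (continuous_const.sub continuous_id)).sub
        (hη.continuous.comp (continuous_const.add continuous_id))))
    · exact ((hgcont.mul ((hη'c.comp (continuous_const.sub continuous_id)).sub
        (hη'c.comp (continuous_const.add continuous_id)))).aestronglyMeasurable)
    · filter_upwards with y
      intro x hx
      rw [norm_mul]
      gcongr
      calc ‖deriv η (x - y) - deriv η (x + y)‖
          ≤ ‖deriv η (x - y)‖ + ‖deriv η (x + y)‖ := norm_sub_le _ _
        _ ≤ C' + C' := add_le_add (hC' _) (hC' _)
        _ = 2 * C' := by ring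
    · exact ((hgcont.integrable_of_hasCompactSupport hgc).restrict).norm.mul_const _
    · filter_upwards with y
      intro x hx
      have h1 : HasDerivAt (fun x => η (x - y)) (deriv η (x - y)) x := by
        simpa [Function.comp_def] using ((hηd (x - y)).hasDerivAt.comp x ((hasDerivAt_id x).sub_const y))
      have h2 : HasDerivAt (fun x => η (x + y)) (deriv η (x + y)) x := by
        simpa [Function.comp_def] using ((hηd (x + y)).hasDerivAt.comp x ((hasDerivAt_id x).add_const y))
      exact (h1.sub h2).const_mul (g y)
  -- integration by parts
  have hIBP : ∀ x : ℝ,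
      (∫ y in Set.Ioi (0:ℝ), g y * (deriv η (x - y) - deriv η (x + y)))
        = Ep η (deriv g) x + 2 * g 0 * η x := by
    intro x
    set f : ℝ → ℝ := fun y => g y * (η (x - y) + η (x + y)) with hf
    set f' : ℝ → ℝ := fun y =>
      deriv g y * (η (x - y) + η (x + y)) + g y * (-(deriv η (x - y)) + deriv η (x + y)) with hf'
    have hfderiv : ∀ y : ℝ, HasDerivAt f (f' y) y := by
      intro y
      have h1 : HasDerivAt (fun y => η (x - y)) (-(deriv η (x - y))) y := by
        simpa [Function.comp_def] using ((hηd (x - y)).hasDerivAt.comp y ((hasDerivAt_id y).const_sub x))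
      have h2 : HasDerivAt (fun y => η (x + y)) (deriv η (x + y)) y := by
        simpa [Function.comp_def] using ((hηd (x + y)).hasDerivAt.comp y ((hasDerivAt_id y).const_add x))
      exact (hgd y).hasDerivAt.mul (h1.add h2)
    have hcontη1 : Continuous (fun y => η (x - y)) :=
      hη.continuous.comp (continuous_const.sub continuous_id)
    have hcontη2 : Continuous (fun y => η (x + y)) :=
      hη.continuous.comp (continuous_const.add continuous_id)
    have hi1 : Integrable (fun y => deriv g y * (η (x - y) + η (x + y)))
        (volume.restrict (Set.Ioi (0:ℝ))) :=
      hint1 (deriv g) _ hg'c hcg' (hcontη1.add hcontη2)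
    have hi2 : Integrable (fun y => g y * (-(deriv η (x - y)) + deriv η (x + y)))
        (volume.restrict (Set.Ioi (0:ℝ))) :=
      hint1 g _ hgcont hgc (((hη'c.comp (continuous_const.sub continuous_id)).neg).add
        (hη'c.comp (continuous_const.add continuous_id)))
    have hf'int : IntegrableOn f' (Set.Ioi (0:ℝ)) := hi1.add hi2
    -- tendsto 0 at top
    obtain ⟨R, hR⟩ := hgc.isBounded.subset_closedBall 0
    have hfR : ∀ y : ℝ, R < y → f y = 0 := by
      intro y hy
      have : g y = 0 := by
        by_contra h
        have : y ∈ tsupport g := subset_tsupport g h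
        have := hR this
        simp only [Metric.mem_closedBall, Real.dist_eq, sub_zero] at this
        have := le_abs_self y
        linarith
      simp [hf, this]
    have htends : Filter.Tendsto f Filter.atTop (nhds 0) := by
      apply Filter.Tendsto.congr' _ tendsto_const_nhds
      filter_upwards [Filter.eventually_gt_atTop R] with y hy
      exact (hfR y hy).symm
    have hparts := integral_Ioi_of_hasDerivAt_of_tendsto
      ((hfderiv 0).continuousAt.continuousWithinAt)
      (fun y _ => hfderiv y) hf'int htends
    have hsplit : ∫ y in Set.Ioi (0:ℝ), f' y =
        (∫ y in Set.Ioi (0:ℝ), deriv g y * (η (x - y) + η (x + y)))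
        + ∫ y in Set.Ioi (0:ℝ), g y * (-(deriv η (x - y)) + deriv η (x + y)) :=
      integral_add hi1 hi2
    have hneg : (∫ y in Set.Ioi (0:ℝ), g y * (-(deriv η (x - y)) + deriv η (x + y)))
        = - ∫ y in Set.Ioi (0:ℝ), g y * (deriv η (x - y) - deriv η (x + y)) := by
      rw [← integral_neg]
      congr 1
      ext y
      ring
    have hf0 : f 0 = g 0 * (2 * η x) := by
      show g 0 * (η (x - 0) + η (x + 0)) = _
      rw [sub_zero, add_zero]; ring
    rw [hsplit, hneg] at hparts
    rw [hf0] at hparts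
    have : Ep η (deriv g) x - (∫ y in Set.Ioi (0:ℝ), g y * (deriv η (x - y) - deriv η (x + y)))
        = 0 - g 0 * (2 * η x) := by
      rw [← hparts]; rfl
    linarith [this]
  constructor
  · intro hg0 x
    rw [(hderivEm x).deriv, hIBP x, hg0]; ring
  · intro x
    rw [(hderivEm x).deriv, hIBP x]; ring
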